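/- arXiv:math/9902123 — 4 statements merged into one kernel-verified Lean document; each statement's English description precedes it below -/
import Mathlib

section
/- Let p be an odd prime and ξ = exp(2πi/p). Then the Gauss sum G(ξ) = Σ_{k=0}^{p-1} ξ^{k²} can be written as γ·(ξ-1)^{(p-1)/2} where γ is a unit in the ring of integers Z[ξ]. -/
/-!
Write `ζ = 1 + (ζ - 1)` and expand binomially: the coefficient of `(ζ - 1)ʲ` in
`G = ∑ₖ ζ^(k²)` is `∑ₖ C(k², j)`, which is divisible by `p` whenever `2j < p - 1`, because
`∑_{x ∈ 𝔽_p} xⁱ = 0` for `i < p - 1`. As `p` is associated to `(ζ - 1)^(p-1)`, this shows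
`G = (ζ - 1)^((p-1)/2) δ`. On the other hand `G² = ±p` is also associated to `(ζ - 1)^(p-1)`,
so `δ²`, and hence `δ`, is a unit.
-/

open Finset Polynomial

theorem ZMod.sum_eq_sum_range {n : ℕ} [NeZero n] {M : Type*} [AddCommMonoid M] (f : ZMod n → M) :
    ∑ x : ZMod n, f x = ∑ k ∈ range n, f k := by
  refine sum_nbij' ZMod.val (↑) ?_ ?_ ?_ ?_ ?_ <;> intro a ha <;>
    simp_all [ZMod.val_lt, Nat.mod_eq_of_lt]

theorem Polynomial.sum_eval_eq_zero_of_natDegree_lt {K : Type*} [Field K] [Fintype K]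
    {f : K[X]} (hf : f.natDegree < Fintype.card K - 1) : ∑ x : K, f.eval x = 0 := by
  simp_rw [eval_eq_sum_range]
  rw [sum_comm]
  refine sum_eq_zero fun i hi => ?_
  rw [← mul_sum, FiniteField.sum_pow_lt_card_sub_one K i (by grind), mul_zero]

theorem Nat.Prime.dvd_sum_range_choose_pow {p n j : ℕ} (hp : p.Prime) (hn : 0 < n)
    (h : n * j < p - 1) :
    p ∣ ∑ k ∈ range p, (k ^ n).choose j := by
  have := Fact.mk hp
  have hfac : (j.factorial : ZMod p) ≠ 0 := by
    rw [Ne, ZMod.natCast_eq_zero_iff, hp.dvd_factorial]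
    have := Nat.le_mul_of_pos_left j hn
    omega
  have hdeg :
      ((descPochhammer (ZMod p) j).comp (X ^ n)).natDegree < Fintype.card (ZMod p) - 1 := by
    refine natDegree_comp_le.trans_lt ?_
    rw [descPochhammer_natDegree, natDegree_X_pow, ZMod.card]
    linarith
  rw [← ZMod.natCast_eq_zero_iff, ← mul_right_inj' hfac, mul_zero]
  calc (j.factorial : ZMod p) * ↑(∑ k ∈ range p, (k ^ n).choose j)
      = ∑ k ∈ range p, ((descPochhammer (ZMod p) j).comp (X ^ n)).eval (k : ZMod p) := by
        simp only [Nat.cast_sum, mul_sum, eval_comp, eval_pow, eval_X]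
        refine sum_congr rfl fun k _ => ?_
        rw [← Nat.cast_pow, descPochhammer_eval_eq_descFactorial,
          Nat.descFactorial_eq_factorial_mul_choose, Nat.cast_mul]
    _ = 0 := by
        rw [← ZMod.sum_eq_sum_range (fun x => eval x _), sum_eval_eq_zero_of_natDegree_lt hdeg]

theorem pow_eq_sum_range_choose_mul_sub_one_pow {R : Type*} [CommRing R] (x : R) {a N : ℕ}
    (h : a < N) : x ^ a = ∑ j ∈ range N, (a.choose j : R) * (x - 1) ^ j := by
  conv_lhs => rw [← sub_add_cancel x 1, add_pow]
  refine sum_subset (range_subset_range.mpr h) (fun j _ hj => ?_) |>.trans (sum_congr rfl ?_)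
  · rw [Nat.choose_eq_zero_of_lt (by simpa using hj)]
    simp
  · intro j _
    rw [one_pow, mul_one, mul_comm]

theorem FiniteField.sum_addChar_sq_eq_gaussSum {F R : Type*} [Field F] [Fintype F]
    [DecidableEq F] [CommRing R] [IsDomain R] (hF : ringChar F ≠ 2) {ψ : AddChar F R} (hψ : ψ ≠ 1) :
    ∑ x, ψ (x ^ 2) = gaussSum ((quadraticChar F).ringHomComp (Int.castRingHom R)) ψ := by
  have hfiber (a : F) : ∑ x ∈ {x | x ^ 2 = a}, ψ (x ^ 2) = (quadraticChar F a + 1 : ℤ) * ψ a := by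
    rw [sum_congr rfl fun x hx => by rw [(mem_filter.mp hx).2], sum_const, nsmul_eq_mul,
      ← quadraticChar_card_sqrts hF a, Set.toFinset_ofPred, Int.cast_natCast]
  rw [← sum_fiberwise univ (· ^ 2), sum_congr rfl fun a _ => hfiber a]
  simp only [Int.cast_add, Int.cast_one, add_mul, one_mul, sum_add_distrib,
    AddChar.sum_eq_zero_of_ne_one hψ, add_zero]
  rfl

namespace IsPrimitiveRoot

variable {A : Type*} [CommRing A] [IsDomain A] {ζ : A} {p : ℕ}

theorem associated_sub_one_pow_prime (hp : p.Prime) (hζ : IsPrimitiveRoot ζ p) :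
    Associated ((ζ - 1) ^ (p - 1)) (p : A) := by
  obtain ⟨n, rfl⟩ : ∃ n, p = n + 1 := ⟨p - 1, by have := hp.pos; omega⟩
  rw [Nat.cast_succ, ← hζ.prod_pow_sub_one_eq_order, Nat.add_sub_cancel]
  have h : Associated (∏ _k ∈ range n, (ζ - 1)) (∏ k ∈ range n, (ζ ^ (k + 1) - 1)) :=
    Associated.prod _ _ _ fun k hk => hζ.associated_sub_one_pow_sub_one_of_coprime <|
      (Nat.coprime_of_lt_prime k.succ_ne_zero (by simpa using hk) hp).symm
  rw [prod_const, card_range] at h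
  exact h.trans (associated_unit_mul_right _ _ (isUnit_neg_one.pow n))

theorem sub_one_pow_dvd_sum_range_pow_pow (hp : p.Prime) (hζ : IsPrimitiveRoot ζ p) {n m : ℕ}
    (hn : 0 < n) (hnm : n * m ≤ p - 1) : (ζ - 1) ^ m ∣ ∑ k ∈ range p, ζ ^ k ^ n := by
  have hN : ∀ k ∈ range p, k ^ n < p ^ n := fun k hk =>
    Nat.pow_lt_pow_left (mem_range.mp hk) hn.ne'
  rw [sum_congr rfl fun k hk => pow_eq_sum_range_choose_mul_sub_one_pow ζ (hN k hk), sum_comm]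
  refine dvd_sum fun j _ => ?_
  rw [← sum_mul, ← Nat.cast_sum]
  rcases le_or_gt m j with hmj | hjm
  · exact (pow_dvd_pow _ hmj).mul_left _
  · obtain ⟨c, hc⟩ := hp.dvd_sum_range_choose_pow hn
      (lt_of_lt_of_le (Nat.mul_lt_mul_of_pos_left hjm hn) hnm)
    refine Dvd.dvd.mul_right ?_ _
    rw [hc, Nat.cast_mul]
    exact ((pow_dvd_pow _ ((Nat.le_mul_of_pos_left m hn).trans hnm)).trans
      (hζ.associated_sub_one_pow_prime hp).dvd).mul_right _

theorem associated_sum_range_pow_sq_sq [CharZero A] (hp : p.Prime) (hp2 : p ≠ 2)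
    (hζ : IsPrimitiveRoot ζ p) : Associated ((∑ k ∈ range p, ζ ^ k ^ 2) ^ 2) (p : A) := by
  have := Fact.mk hp
  set ψ := AddChar.zmodChar p hζ.pow_eq_one
  have hψ : ψ.IsPrimitive := AddChar.zmodChar_primitive_of_primitive_root p hζ
  have hF : ringChar (ZMod p) ≠ 2 := by rwa [ZMod.ringChar_zmod_n]
  set χ := (quadraticChar (ZMod p)).ringHomComp (Int.castRingHom A)
  have hχ : χ ≠ 1 :=
    (MulChar.ringHomComp_ne_one_iff (RingHom.injective_int _)).mpr (quadraticChar_ne_one hF)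
  have hsum : ∑ k ∈ range p, ζ ^ k ^ 2 = ∑ x : ZMod p, ψ (x ^ 2) := by
    rw [ZMod.sum_eq_sum_range fun x => ψ (x ^ 2)]
    simp only [← Nat.cast_pow, ψ, AddChar.zmodChar_apply']
  rw [hsum, FiniteField.sum_addChar_sq_eq_gaussSum hF (by simpa using hψ one_ne_zero),
    gaussSum_sq hχ ((quadraticChar_isQuadratic _).comp _) hψ, ZMod.card]
  exact associated_unit_mul_left _ _ (isUnit_neg_one.map χ)

theorem exists_isUnit_sum_range_pow_sq_eq [CharZero A] (hp : p.Prime) (hodd : Odd p)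
    (hζ : IsPrimitiveRoot ζ p) :
    ∃ γ : A, IsUnit γ ∧ ∑ k ∈ range p, ζ ^ k ^ 2 = γ * (ζ - 1) ^ ((p - 1) / 2) := by
  set m := (p - 1) / 2
  have hm : p - 1 = 2 * m := by obtain ⟨t, rfl⟩ := hodd; omega
  obtain ⟨δ, hδ⟩ := hζ.sub_one_pow_dvd_sum_range_pow_pow hp two_pos hm.ge
  have hl : ((ζ - 1) ^ m) ^ 2 ≠ 0 := pow_ne_zero _ (pow_ne_zero _ (sub_ne_zero.mpr
    (hζ.ne_one hp.one_lt)))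
  have hassoc : Associated (((ζ - 1) ^ m) ^ 2 * δ ^ 2) (((ζ - 1) ^ m) ^ 2 * 1) := by
    rw [mul_one]
    have := (hζ.associated_sum_range_pow_sq_sq hp (hodd.ne_two_of_dvd_nat dvd_rfl)).trans
      (hζ.associated_sub_one_pow_prime hp).symm
    rwa [hδ, hm, mul_pow, pow_mul'] at this
  refine ⟨δ, ?_, by rw [hδ, mul_comm]⟩
  exact (isUnit_pow_iff two_ne_zero).mp
    (associated_one_iff_isUnit.mp (hassoc.of_mul_left (Associated.refl _) hl))

end IsPrimitiveRoot

/-- The quadratic Gauss sum `G(ξ) = Σ_{k=0}^{p-1} ξ^{k²}` equals `γ (ξ-1)^{(p-1)/2}`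
with `γ` a unit of `ℤ[ξ]`. -/
theorem gauss_sum_unit_times_power (p : ℕ) (hp : p.Prime) (hodd : Odd p)
    (ξ : ℂ) (hξ : ξ = Complex.exp (2 * Real.pi * Complex.I / p)) :
    ∃ γ ∈ Subring.closure {ξ}, (∃ γ' ∈ Subring.closure {ξ}, γ * γ' = 1) ∧
      (∑ k ∈ Finset.range p, ξ ^ (k ^ 2)) = γ * (ξ - 1) ^ ((p - 1) / 2) := by
  set R := Subring.closure {ξ}
  have hξ' : IsPrimitiveRoot ξ p := hξ ▸ Complex.isPrimitiveRoot_exp p hp.ne_zero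
  have hζ : IsPrimitiveRoot (⟨ξ, Subring.subset_closure rfl⟩ : R) p :=
    hξ'.of_map_of_injective (f := R.subtype) Subtype.val_injective
  obtain ⟨_, ⟨u, rfl⟩, hγ⟩ := hζ.exists_isUnit_sum_range_pow_sq_eq hp hodd
  exact ⟨u, (u : R).2, ⟨(↑u⁻¹ : R), (↑u⁻¹ : R).2, congrArg Subtype.val u.mul_inv⟩,
    by simpa using congrArg Subtype.val hγ⟩
end

section
/- Let p be an odd prime, ξ = exp(2πi/p), and s = exp(πi/2p). Then i·(s + s^{-1}) lies in Z[ξ] and is divisible by (ξ - 1) in Z[ξ]. -/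
open Complex

lemma pow_sub_pow_aux (ξ : ℂ) (u v : ℕ) :
    ξ ^ u - ξ ^ v ∈ Subring.closure {ξ} ∧
    ∃ c ∈ Subring.closure {ξ}, ξ ^ u - ξ ^ v = (ξ - 1) * c := by
  have hξ : ξ ∈ Subring.closure {ξ} := Subring.subset_closure rfl
  refine ⟨sub_mem (pow_mem hξ u) (pow_mem hξ v),
    (∑ i ∈ Finset.range u, ξ ^ i) - (∑ i ∈ Finset.range v, ξ ^ i),
    sub_mem (sum_mem fun i _ => pow_mem hξ i) (sum_mem fun i _ => pow_mem hξ i), ?_⟩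
  have h1 := geom_sum_mul ξ u
  have h2 := geom_sum_mul ξ v
  linear_combination h2 - h1

/-- `i·(s + s⁻¹)` lies in `ℤ[ξ]` and is divisible there by `ξ - 1`. -/
theorem I_mul_quantum_two_dvd (p : ℕ) (hp : p.Prime) (hodd : Odd p)
    (ξ s : ℂ) (hξ : ξ = Complex.exp (2 * Real.pi * Complex.I / p))
    (hs : s = Complex.exp (Real.pi * Complex.I / (2 * p))) :
    Complex.I * (s + s⁻¹) ∈ Subring.closure {ξ} ∧
    ∃ c ∈ Subring.closure {ξ}, Complex.I * (s + s⁻¹) = (ξ - 1) * c := by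
  have hp0 : (p : ℂ) ≠ 0 := Nat.cast_ne_zero.mpr hp.pos.ne'
  have hsne : s ≠ 0 := hs ▸ Complex.exp_ne_zero _
  have hpow : ∀ n : ℕ, s ^ n = Complex.exp (n * (Real.pi * Complex.I / (2 * p))) := by
    intro n; rw [hs, ← Complex.exp_nat_mul]
  have hξ4 : ξ = s ^ 4 := by
    rw [hξ, hpow]
    congr 1
    push_cast
    field_simp
    ring
  have hs2p : s ^ (2 * p) = -1 := by
    rw [hpow]
    have : ((2 * p : ℕ) : ℂ) * (Real.pi * Complex.I / (2 * p)) = Real.pi * Complex.I := by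
      push_cast; field_simp
    rw [this, Complex.exp_pi_mul_I]
  have hI : Complex.I = s ^ p := by
    rw [hpow]
    have : ((p : ℕ) : ℂ) * (Real.pi * Complex.I / (2 * p)) = (Real.pi / 2 : ℝ) * Complex.I := by
      push_cast; field_simp
    rw [this, Complex.exp_mul_I]
    simp [← Complex.ofReal_cos, ← Complex.ofReal_sin]
  have h4 : p % 4 = 1 ∨ p % 4 = 3 := by
    have := Nat.odd_iff.mp hodd; omega
  have hmain : ∃ u v : ℕ, Complex.I * (s + s⁻¹) = ξ ^ u - ξ ^ v := by
    rcases h4 with h4 | h4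
    · obtain ⟨k, rfl⟩ : ∃ k, p = 4 * k + 1 := ⟨p / 4, by omega⟩
      refine ⟨k, 3 * k + 1, ?_⟩
      rw [hξ4, hI]
      field_simp
      linear_combination (s ^ (4 * k + 3)) * hs2p
    · obtain ⟨k, rfl⟩ : ∃ k, p = 4 * k + 3 := ⟨p / 4, by omega⟩
      refine ⟨k + 1, 3 * k + 2, ?_⟩
      rw [hξ4, hI]
      field_simp
      linear_combination (s ^ (4 * k + 3)) * hs2p
  obtain ⟨u, v, huv⟩ := hmain
  rw [huv]
  exact pow_sub_pow_aux ξ u v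
end

section
/- Let p be an odd prime, ξ = exp(2πi/p), q = exp(πi/p), and [m] = (q^m - q^{-m})/(q - q^{-1}) the quantum integer. For an integer f with f ≢ 0 mod p and an integer n with 1 ≤ n ≤ (p-1)/2, the sum S_n(f) = Σ_{k=n}^{p-n-1} (-1)^k [2k+1] ξ^{(k²+k)f/2} C(k+n, k-n) lies in Z[ξ] and is divisible by (ξ-1)^{(p-1)/2 - n} in Z[ξ]. -/
/-!
Pair the terms `k` and `p - 1 - k` of `S_n(f)`. Since `q ^ (2p) = 1`, the quantum integers
`[2k+1]` and `[2(p-1-k)+1]` are opposite; the signs agree and so do the powers of `ξ`, because the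
triangular numbers `(k² + k)/2` and `((p-1-k)² + (p-1-k))/2` are congruent mod `p` for odd `p`;
and `C(k+n, 2n) ≡ C(p-1-k+n, 2n) mod p`, because the falling factorial
`(x + n)(x + n - 1)⋯(x - n + 1)` is invariant under `x ↦ -1 - x` and `(2n)!` is a unit mod `p`. So every pair sum, hence `2 S_n(f)`,
hence `S_n(f)`, is divisible by `p` in `ℤ[ξ]`. Finally `p = ∏ (1 - ζ)` over the primitive `p`-th
roots `ζ = ξ^i`, and each factor is divisible by `ξ - 1`, so `(ξ - 1) ^ (p - 1) ∣ p`.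
-/

open Finset Polynomial

theorem zpow_eq_zpow_of_pow_eq_one {G₀ : Type*} [GroupWithZero G₀] {q : G₀} {M : ℕ}
    (h : q ^ M = 1) {a b : ℤ} (hab : a ≡ b [ZMOD M]) : q ^ a = q ^ b := by
  rcases Nat.eq_zero_or_pos M with rfl | hM
  · simpa [Int.ModEq] using congrArg (q ^ ·) hab
  have hq : q ≠ 0 := by rintro rfl; simp [zero_pow hM.ne'] at h
  rw [← Int.emod_add_mul_ediv a M, ← Int.emod_add_mul_ediv b M, (hab : a % M = b % M),
    zpow_add₀ hq, zpow_add₀ hq, zpow_mul, zpow_mul, zpow_natCast, h, one_zpow, one_zpow]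

section Field

variable {K : Type*} [Field K]

theorem zpow_mem_closure_singleton {ξ : K} {p : ℕ} (hp : p ≠ 0) (hξ : ξ ^ p = 1) (m : ℤ) :
    ξ ^ m ∈ Subring.closure {ξ} := by
  obtain ⟨r, hr⟩ : ∃ r : ℕ, (r : ℤ) = m % p :=
    ⟨_, Int.toNat_of_nonneg (Int.emod_nonneg _ (by exact_mod_cast hp))⟩
  rw [← zpow_eq_zpow_of_pow_eq_one hξ (Int.mod_modEq m p), ← hr, zpow_natCast]
  exact pow_mem (Subring.subset_closure (Set.mem_singleton ξ)) _

theorem quantumInt_odd_eq_sum {q : K} (hq : q - q⁻¹ ≠ 0) (k : ℕ) :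
    (q ^ (2 * k + 1) - q ^ (-(2 * (k : ℤ) + 1))) / (q - q⁻¹)
      = ∑ i ∈ range (2 * k + 1), (q ^ 2) ^ ((i : ℤ) - k) := by
  have hq0 : q ≠ 0 := by rintro rfl; simp at hq
  have hterm : ∀ i : ℕ, (q ^ 2) ^ ((i : ℤ) - k) * (q - q⁻¹)
      = q ^ (2 * ((i + 1 : ℕ) : ℤ) - 2 * k - 1) - q ^ (2 * (i : ℤ) - 2 * k - 1) := by
    intro i
    rw [← zpow_natCast, ← zpow_mul, mul_sub, ← zpow_add_one₀ hq0, ← zpow_sub_one₀ hq0]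
    push_cast
    ring_nf
  rw [div_eq_iff hq, sum_mul, sum_congr rfl fun i _ => hterm i,
    sum_range_sub (fun i : ℕ => q ^ (2 * (i : ℤ) - 2 * k - 1)), ← zpow_natCast]
  congr 2 <;> push_cast <;> ring

theorem quantumInt_odd_mem_closure {ξ q : K} {p : ℕ} (hp : p ≠ 0) (hξ : ξ ^ p = 1) (hq2 : q ^ 2 = ξ)
    (hqq : q - q⁻¹ ≠ 0) (k : ℕ) :
    (q ^ (2 * k + 1) - q ^ (-(2 * (k : ℤ) + 1))) / (q - q⁻¹) ∈ Subring.closure {ξ} := by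
  rw [quantumInt_odd_eq_sum hqq, hq2]
  exact sum_mem fun i _ => zpow_mem_closure_singleton hp hξ _

end Field

theorem Finset.sum_Icc_reflect {M : Type*} [AddCommMonoid M] (f : ℕ → M) (a N : ℕ) :
    ∑ k ∈ Icc a (N - a), f (N - k) = ∑ k ∈ Icc a (N - a), f k :=
  sum_nbij' (N - ·) (N - ·) (by simp only [mem_Icc]; omega) (by simp only [mem_Icc]; omega)
    (by simp only [mem_Icc]; omega) (by simp only [mem_Icc]; omega) fun _ _ => rfl

theorem triangle_modEq_of_add_add_one_eq {p j k : ℕ} (hp : Odd p) (h : j + k + 1 = p) :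
    (((k ^ 2 + k) / 2 : ℕ) : ℤ) ≡ (((j ^ 2 + j) / 2 : ℕ) : ℤ) [ZMOD p] := by
  obtain ⟨m, rfl⟩ := hp
  have htwo : ∀ i : ℕ, (((i ^ 2 + i) / 2 : ℕ) : ℤ) * 2 = i ^ 2 + i := fun i => by
    have hdvd : 2 ∣ i ^ 2 + i := by
      rw [sq, ← Nat.mul_succ]; exact (Nat.even_mul_succ_self i).two_dvd
    exact_mod_cast Nat.div_mul_cancel hdvd
  have hk : (k : ℤ) = 2 * m - j := by omega
  refine Int.modEq_iff_add_fac.mpr ⟨j - m, mul_right_cancel₀ two_ne_zero ?_⟩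
  simp only [Nat.cast_add, Nat.cast_mul, Nat.cast_ofNat, Nat.cast_one]
  linear_combination htwo j - htwo k - (k + 2 * m - j + 1) * hk

theorem descPochhammer_eval_neg {R : Type*} [CommRing R] (r : R) (m : ℕ) :
    (descPochhammer R m).eval (-r) = (-1) ^ m * (descPochhammer R m).eval (r + m - 1) := by
  rw [descPochhammer_eval_eq_ascPochhammer, show -r - m + 1 = -(r + m - 1) by ring,
    ascPochhammer_eval_neg_eq_descPochhammer]

theorem Nat.choose_two_mul_reflect {p n j k : ℕ} [Fact p.Prime] (hn : 2 * n < p)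
    (h : j + k + 1 = p) :
    ((k + n).choose (2 * n) : ZMod p) = ((j + n).choose (2 * n) : ZMod p) := by
  have hfact : ((2 * n).factorial : ZMod p) ≠ 0 := by
    rw [Ne, ZMod.natCast_eq_zero_iff, (Fact.out : p.Prime).dvd_factorial]
    omega
  have hk : ((k + n : ℕ) : ZMod p) = -((j + n : ℕ) - (2 * n : ℕ) + 1) := by
    have : ((j + k + 1 : ℕ) : ZMod p) = 0 := by rw [h, ZMod.natCast_self]
    push_cast at this ⊢
    linear_combination this
  refine mul_left_cancel₀ hfact ?_
  rw [← Nat.cast_mul, ← Nat.cast_mul, ← Nat.descFactorial_eq_factorial_mul_choose,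
    ← Nat.descFactorial_eq_factorial_mul_choose, ← descPochhammer_eval_eq_descFactorial,
    ← descPochhammer_eval_eq_descFactorial, hk, descPochhammer_eval_neg, pow_mul, neg_one_sq,
    one_pow, one_mul]
  ring_nf

theorem Odd.natCast_dvd_of_dvd_two_mul {R : Type*} [CommRing R] {p : ℕ} (hp : Odd p) {x : R}
    (h : (p : R) ∣ 2 * x) : (p : R) ∣ x := by
  obtain ⟨m, rfl⟩ := hp
  have hx : x = (m + 1) * (2 * x) - ((2 * m + 1 : ℕ) : R) * x := by push_cast; ring
  rw [hx]
  exact dvd_sub (dvd_mul_of_dvd_right h _) (dvd_mul_right _ _)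

theorem IsPrimitiveRoot.sub_one_pow_dvd_prime {R : Type*} [CommRing R] [IsDomain R] {ζ : R}
    {p : ℕ} [hp : Fact p.Prime] (h : IsPrimitiveRoot ζ p) : (ζ - 1) ^ (p - 1) ∣ (p : R) := by
  rw [← eval_one_cyclotomic_prime (R := R), cyclotomic_eq_prod_X_sub_primitiveRoots h, eval_prod,
    ← Nat.totient_prime hp.out, ← h.card_primitiveRoots, ← prod_const]
  refine prod_dvd_prod_of_dvd _ _ fun μ hμ => ?_
  obtain ⟨i, -, rfl⟩ :=
    h.eq_pow_of_pow_eq_one ((mem_primitiveRoots hp.out.pos).mp hμ).pow_eq_one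
  simpa [dvd_sub_comm] using sub_dvd_pow_sub_pow ζ 1 i

section Summand

variable {K : Type*} [Field K]

-- The `k`-th term of `S_n(f)`; its second factor is the quantum integer `[2k+1]`.
def summand (ξ q : K) (f : ℤ) (n k : ℕ) : K :=
  (-1 : K) ^ k * ((q ^ (2 * k + 1) - q ^ (-(2 * (k : ℤ) + 1))) / (q - q⁻¹)) *
    ξ ^ ((((k ^ 2 + k) / 2 : ℕ) : ℤ) * f) * (Nat.choose (k + n) (k - n) : K)

variable {ξ q : K} {p : ℕ}

theorem summand_mem_closure (hp : p ≠ 0) (hξ : ξ ^ p = 1) (hq2 : q ^ 2 = ξ) (hqq : q - q⁻¹ ≠ 0)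
    (f : ℤ) (n k : ℕ) : summand ξ q f n k ∈ Subring.closure {ξ} :=
  mul_mem (mul_mem (mul_mem (pow_mem (neg_mem (one_mem _)) k)
    (quantumInt_odd_mem_closure hp hξ hq2 hqq k)) (zpow_mem_closure_singleton hp hξ _))
    (natCast_mem _ _)

theorem summand_add_summand_reflect [Fact p.Prime] (hodd : Odd p) (hξ : ξ ^ p = 1)
    (hq2 : q ^ 2 = ξ) (hqq : q - q⁻¹ ≠ 0) (f : ℤ) {n j k : ℕ} (h : j + k + 1 = p) (hj : n ≤ j)
    (hk : n ≤ k) :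
    ∃ c ∈ Subring.closure {ξ}, summand ξ q f n j + summand ξ q f n k = p * c := by
  have hp : p ≠ 0 := by omega
  have hsign : (-1 : K) ^ k = (-1) ^ j := by
    rw [neg_one_pow_eq_pow_mod_two, neg_one_pow_eq_pow_mod_two (n := j)]
    obtain ⟨m, rfl⟩ := hodd
    congr 1
    omega
  have hq2p : q ^ (2 * p) = 1 := by rw [pow_mul, hq2, hξ]
  have hqint : q ^ (2 * k + 1) - q ^ (-(2 * (k : ℤ) + 1))
      = -(q ^ (2 * j + 1) - q ^ (-(2 * (j : ℤ) + 1))) := by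
    rw [← zpow_natCast, ← zpow_natCast (n := 2 * j + 1),
      zpow_eq_zpow_of_pow_eq_one hq2p (a := ((2 * k + 1 : ℕ) : ℤ)) (b := -(2 * (j : ℤ) + 1))
        (Int.modEq_iff_add_fac.mpr ⟨-1, by push_cast; omega⟩),
      zpow_eq_zpow_of_pow_eq_one hq2p (a := -(2 * (k : ℤ) + 1)) (b := ((2 * j + 1 : ℕ) : ℤ))
        (Int.modEq_iff_add_fac.mpr ⟨1, by push_cast; omega⟩)]
    ring
  have hexp : ξ ^ ((((k ^ 2 + k) / 2 : ℕ) : ℤ) * f) = ξ ^ ((((j ^ 2 + j) / 2 : ℕ) : ℤ) * f) :=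
    zpow_eq_zpow_of_pow_eq_one hξ ((triangle_modEq_of_add_add_one_eq hodd h).mul_right f)
  obtain ⟨d, hd⟩ : ∃ d : ℤ, ((j + n).choose (j - n) : ℤ) = (k + n).choose (k - n) + p * d := by
    rw [Nat.choose_symm_of_eq_add (show j + n = j - n + 2 * n by omega),
      Nat.choose_symm_of_eq_add (show k + n = k - n + 2 * n by omega)]
    exact Int.modEq_iff_add_fac.mp (Int.natCast_modEq_iff.mpr
      ((ZMod.natCast_eq_natCast_iff _ _ _).mp (Nat.choose_two_mul_reflect (by omega) h)))
  refine ⟨(-1) ^ j * ((q ^ (2 * j + 1) - q ^ (-(2 * (j : ℤ) + 1))) / (q - q⁻¹)) *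
      ξ ^ ((((j ^ 2 + j) / 2 : ℕ) : ℤ) * f) * d,
    mul_mem (mul_mem (mul_mem (pow_mem (neg_mem (one_mem _)) j)
      (quantumInt_odd_mem_closure hp hξ hq2 hqq j)) (zpow_mem_closure_singleton hp hξ _))
      (intCast_mem _ d),
    ?_⟩
  have hdK : ((j + n).choose (j - n) : K) = ((k + n).choose (k - n) : K) + (p : K) * (d : K) := by
    simpa using congrArg (Int.cast : ℤ → K) hd
  rw [summand, summand, hsign, hqint, hexp, hdK]
  ring

theorem natCast_dvd_sum_summand [Fact p.Prime] (hodd : Odd p) (hξ : ξ ^ p = 1)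
    (hq2 : q ^ 2 = ξ) (hqq : q - q⁻¹ ≠ 0) (f : ℤ) (n : ℕ) :
    ∃ s : Subring.closure {ξ}, (s : K) = ∑ k ∈ Icc n (p - n - 1), summand ξ q f n k ∧
      (p : Subring.closure {ξ}) ∣ s := by
  have hp : p ≠ 0 := (Fact.out : p.Prime).ne_zero
  let t : ℕ → Subring.closure {ξ} := fun k =>
    ⟨summand ξ q f n k, summand_mem_closure hp hξ hq2 hqq f n k⟩
  refine ⟨∑ k ∈ Icc n (p - 1 - n), t k, by rw [Nat.sub_right_comm]; push_cast; rfl, ?_⟩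
  refine hodd.natCast_dvd_of_dvd_two_mul ?_
  rw [two_mul]
  nth_rewrite 1 [← sum_Icc_reflect]
  rw [← sum_add_distrib]
  refine dvd_sum fun k hk => ?_
  rw [mem_Icc] at hk
  obtain ⟨c, hc, hsum⟩ := summand_add_summand_reflect hodd hξ hq2 hqq f (j := p - 1 - k) (k := k)
    (by omega) (by omega) hk.1
  exact ⟨⟨c, hc⟩, Subtype.ext (by push_cast; exact hsum)⟩

end Summand

theorem S_n_f_divisibility_general (p : ℕ) (hp : p.Prime) (hodd : Odd p)
    (ξ q : ℂ) (hξ : ξ = Complex.exp (2 * Real.pi * Complex.I / p))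
    (hq : q = Complex.exp (Real.pi * Complex.I / p))
    (f : ℤ) (n : ℕ) :
    (∑ k ∈ Finset.Icc n (p - n - 1),
        (-1 : ℂ) ^ k * ((q ^ (2 * k + 1) - q ^ (-(2 * (k : ℤ) + 1))) / (q - q⁻¹)) *
          ξ ^ ((((k ^ 2 + k) / 2 : ℕ) : ℤ) * f) * (Nat.choose (k + n) (k - n) : ℂ))
      ∈ Subring.closure {ξ} ∧
    ∃ c ∈ Subring.closure {ξ},
      (∑ k ∈ Finset.Icc n (p - n - 1),
        (-1 : ℂ) ^ k * ((q ^ (2 * k + 1) - q ^ (-(2 * (k : ℤ) + 1))) / (q - q⁻¹)) *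
          ξ ^ ((((k ^ 2 + k) / 2 : ℕ) : ℤ) * f) * (Nat.choose (k + n) (k - n) : ℂ))
        = (ξ - 1) ^ ((p - 1) / 2 - n) * c := by
  have := Fact.mk hp
  have hprim : IsPrimitiveRoot ξ p := hξ ▸ Complex.isPrimitiveRoot_exp p hp.ne_zero
  have hq2 : q ^ 2 = ξ := by
    rw [hq, hξ, ← Complex.exp_nat_mul]
    push_cast
    ring_nf
  have hqq : q - q⁻¹ ≠ 0 := by
    rw [sub_ne_zero]
    intro h
    apply hprim.ne_one hp.one_lt
    rw [← hq2, sq]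
    nth_rewrite 2 [h]
    exact mul_inv_cancel₀ (hq ▸ Complex.exp_ne_zero _)
  obtain ⟨s, hs, hps⟩ := natCast_dvd_sum_summand hodd hprim.pow_eq_one hq2 hqq f n
  let ξ' : Subring.closure {ξ} := ⟨ξ, Subring.subset_closure (Set.mem_singleton ξ)⟩
  have hprim' : IsPrimitiveRoot ξ' p :=
    hprim.of_map_of_injective (f := (Subring.closure {ξ}).subtype) Subtype.val_injective
  obtain ⟨c, hc⟩ := ((pow_dvd_pow (ξ' - 1) (show (p - 1) / 2 - n ≤ p - 1 by omega)).trans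
    hprim'.sub_one_pow_dvd_prime).trans hps
  change (∑ k ∈ Icc n (p - n - 1), summand ξ q f n k) ∈ _ ∧
    ∃ c ∈ _, ∑ k ∈ Icc n (p - n - 1), summand ξ q f n k = _
  rw [← hs]
  exact ⟨s.2, c, c.2, by rw [hc]; push_cast; rfl⟩

/-- Divisibility of the sums `S_n(f)` (Lemma 2.4 of Murakami 1998):
`S_n(f) = Σ_{k=n}^{p-n-1} (-1)^k [2k+1] ξ^{(k²+k)f/2} C(k+n,k-n)` lies in `ℤ[ξ]`
and is divisible by `(ξ-1)^{(p-1)/2-n}`. -/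
theorem S_n_f_divisibility (p : ℕ) (hp : p.Prime) (hodd : Odd p)
    (ξ q : ℂ) (hξ : ξ = Complex.exp (2 * Real.pi * Complex.I / p))
    (hq : q = Complex.exp (Real.pi * Complex.I / p))
    (f : ℤ) (hf : ¬ ((p : ℤ) ∣ f)) (n : ℕ) (hn1 : 1 ≤ n) (hn2 : n ≤ (p - 1) / 2) :
    (∑ k ∈ Finset.Icc n (p - n - 1),
        (-1 : ℂ) ^ k * ((q ^ (2 * k + 1) - q ^ (-(2 * (k : ℤ) + 1))) / (q - q⁻¹)) *
          ξ ^ ((((k ^ 2 + k) / 2 : ℕ) : ℤ) * f) * (Nat.choose (k + n) (k - n) : ℂ))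
      ∈ Subring.closure {ξ} ∧
    ∃ c ∈ Subring.closure {ξ},
      (∑ k ∈ Finset.Icc n (p - n - 1),
        (-1 : ℂ) ^ k * ((q ^ (2 * k + 1) - q ^ (-(2 * (k : ℤ) + 1))) / (q - q⁻¹)) *
          ξ ^ ((((k ^ 2 + k) / 2 : ℕ) : ℤ) * f) * (Nat.choose (k + n) (k - n) : ℂ))
        = (ξ - 1) ^ ((p - 1) / 2 - n) * c :=
  S_n_f_divisibility_general p hp hodd ξ q hξ hq f n
end

section
/- Let p be an odd prime, ξ = exp(2πi/p), u an integer with p = 4u + ε, ε = ±1. Then ξ^u + ξ^{-u} is invertible in Z[1/2, ξ]. -/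
/-!
`ξ ^ u + ξ ^ (-u) = ξ ^ (-u) * (1 + ξ ^ (2 * u))`. The first factor is a unit because `ξ ^ p = 1`;
for the second, `ζ = ξ ^ (2 * u)` is again a `p`-th root of unity and `p` is odd, so
`1 + ζ ∣ 1 + ζ ^ p = 2`, which is a unit once `1 / 2` is adjoined.
-/

theorem IsUnit.one_add_of_pow_eq_one {A : Type*} [CommRing A] {x : A} {n : ℕ} (hn : Odd n)
    (hx : x ^ n = 1) (h2 : IsUnit (2 : A)) : IsUnit (1 + x) :=
  isUnit_of_dvd_unit (by simpa [hx, one_add_one_eq_two] using hn.add_dvd_pow_add_pow 1 x) h2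

theorem Units.isUnit_zpow_add_zpow_neg {A : Type*} [CommRing A] {z : Aˣ} {n : ℕ} (hn : Odd n)
    (hz : z ^ n = 1) (h2 : IsUnit (2 : A)) (u : ℤ) :
    IsUnit (((z ^ u : Aˣ) : A) + ((z ^ (-u) : Aˣ) : A)) := by
  have hfactor : ((z ^ u : Aˣ) : A) + ((z ^ (-u) : Aˣ) : A) =
      ((z ^ (-u) : Aˣ) : A) * (1 + ((z ^ (2 * u) : Aˣ) : A)) := by
    rw [mul_add, mul_one, ← Units.val_mul, ← zpow_add, add_comm]
    ring_nf
  have hpow : ((z ^ (2 * u) : Aˣ) : A) ^ n = 1 := by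
    rw [← Units.val_pow_eq_pow_val, ← zpow_natCast, ← zpow_mul, mul_comm, zpow_mul,
      zpow_natCast, hz, one_zpow, Units.val_one]
  rw [hfactor]
  exact (Units.isUnit _).mul (IsUnit.one_add_of_pow_eq_one hn hpow h2)

theorem Subring.coe_units_zpow {K : Type*} [DivisionRing K] {S : Subring K} (z : Sˣ) (m : ℤ) :
    (((z ^ m : Sˣ) : S) : K) = ((z : S) : K) ^ m := by
  have h := Units.val_zpow_eq_zpow_val (Units.map S.subtype.toMonoidHom z) m
  rwa [← map_zpow, Units.coe_map, Units.coe_map] at h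

theorem Subring.exists_mem_zpow_add_zpow_neg_mul_eq_one {K : Type*} [Field K] {S : Subring K}
    {ξ : K} (hξS : ξ ∈ S) {n : ℕ} (hn : Odd n) (hξ : ξ ^ n = 1) (h2 : IsUnit (2 : S))
    (u : ℤ) : ∃ c ∈ S, (ξ ^ u + ξ ^ (-u)) * c = 1 := by
  let z : Sˣ := Units.ofPowEqOne ⟨ξ, hξS⟩ n (Subtype.ext hξ) hn.pos.ne'
  have hzξ : ((z : S) : K) = ξ := rfl
  have hz : z ^ n = 1 := Units.pow_ofPowEqOne _ _
  obtain ⟨c, hc⟩ := (Units.isUnit_zpow_add_zpow_neg hn hz h2 u).exists_right_inv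
  refine ⟨c, c.2, ?_⟩
  simpa only [Subring.coe_mul, Subring.coe_add, Subring.coe_units_zpow, hzξ, Subring.coe_one]
    using congrArg Subtype.val hc

theorem zeta_u_add_inv_unit_general (p : ℕ) (hodd : Odd p) (u : ℤ) (ξ : ℂ)
    (hξ : ξ = Complex.exp (2 * Real.pi * Complex.I / p)) :
    ∃ c ∈ Subring.closure {(1 / 2 : ℂ), ξ}, (ξ ^ u + ξ ^ (-u)) * c = 1 := by
  set S := Subring.closure {(1 / 2 : ℂ), ξ}
  have hhalf : (1 / 2 : ℂ) ∈ S := Subring.subset_closure (Set.mem_insert _ _)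
  have hξS : ξ ∈ S := Subring.subset_closure (Set.mem_insert_of_mem _ rfl)
  have hξp : ξ ^ p = 1 := hξ ▸ (Complex.isPrimitiveRoot_exp p hodd.pos.ne').pow_eq_one
  have h2 : IsUnit (2 : S) := by
    refine IsUnit.of_mul_eq_one (⟨1 / 2, hhalf⟩ : S) (Subtype.ext ?_)
    norm_num [show ((2 : S) : ℂ) = 2 from rfl]
  exact Subring.exists_mem_zpow_add_zpow_neg_mul_eq_one hξS hodd hξp h2 u

/-- `ξ^u + ξ^{-u}` is invertible in `ℤ[1/2, ξ]`. -/
theorem zeta_u_add_inv_unit (p : ℕ) (hp : p.Prime) (hodd : Odd p)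
    (u ε : ℤ) (hε : ε = 1 ∨ ε = -1) (hpu : (p : ℤ) = 4 * u + ε)
    (ξ : ℂ) (hξ : ξ = Complex.exp (2 * Real.pi * Complex.I / p)) :
    ∃ c ∈ Subring.closure {(1 / 2 : ℂ), ξ}, (ξ ^ u + ξ ^ (-u)) * c = 1 :=
  zeta_u_add_inv_unit_general p hodd u ξ hξ
end
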